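/- Let w : [t₀,∞) → ℝ_{≥0} be right-continuous and piecewise absolutely continuous with discontinuities only at a strictly increasing sequence of times τ_1 < τ_2 < ... (tending to ∞ if infinite). Suppose ẇ(t) ≤ λ(t)·w(t) for almost all t not in the sequence, where λ is piecewise constant and bounded, and w(τ_k) ≤ r_k·w(τ_k⁻) with r_k > 0 at each event time. Then for all t ≥ t₀: w(t) ≤ (∏_{τ_k ∈ (t₀,t]} r_k) · exp(∫_{t₀}^{t} λ(s) ds) · w(t₀). -/

import Mathlib

/-!
Where `w > 0`, `log w` has right derivative `w' / w ≤ λ`, so the integral form of the mean value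
inequality gives `w b ≤ exp (∫ a..b, λ) * w a` on every event-free interval; if `w` vanishes,
the same bound started from its last zero shows `w b = 0`. At an event `τ k` the bound valid
just before `τ k` passes to the left limit `w (τ k⁻)`, and the jump multiplies it by `r k`.
Induction on the number of events in `(t₀, t]` concludes.
-/

open Filter MeasureTheory Topology Set Real

section Gronwall

variable {w w' lam : ℝ → ℝ} {a b : ℝ}

theorem le_exp_integral_mul_of_pos (hab : a ≤ b) (hw : ContinuousOn w (Icc a b))
    (hpos : ∀ x ∈ Icc a b, 0 < w x)
    (hderiv : ∀ x ∈ Ioo a b, HasDerivWithinAt w (w' x) (Ioi x) x)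
    (hflow : ∀ x ∈ Ioo a b, w' x ≤ lam x * w x) (hlam : IntervalIntegrable lam volume a b) :
    w b ≤ exp (∫ s in a..b, lam s) * w a := by
  have hlog : log (w b) - log (w a) ≤ ∫ s in a..b, lam s := by
    refine intervalIntegral.sub_le_integral_of_hasDeriv_right_of_le hab
      (hw.log fun x hx => (hpos x hx).ne') (fun x hx => (hderiv x hx).log (hpos x ?_).ne')
      ((intervalIntegrable_iff_integrableOn_Icc_of_le hab).1 hlam) fun x hx => ?_
    · exact Ioo_subset_Icc_self hx
    · rw [div_le_iff₀ (hpos x (Ioo_subset_Icc_self hx))]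
      exact hflow x hx
  calc w b = exp (log (w b) - log (w a)) * w a := by
        rw [exp_sub, exp_log (hpos b ⟨hab, le_rfl⟩), exp_log (hpos a ⟨le_rfl, hab⟩),
          div_mul_cancel₀ _ (hpos a ⟨le_rfl, hab⟩).ne']
    _ ≤ exp (∫ s in a..b, lam s) * w a := by gcongr; exact (hpos a ⟨le_rfl, hab⟩).le

/-- Letting the left endpoint tend to `a` removes the need for `w a > 0`. -/
theorem le_exp_integral_mul_of_pos_on_Ioc (hab : a ≤ b) (hw : ContinuousOn w (Icc a b))
    (hpos : ∀ x ∈ Ioc a b, 0 < w x)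
    (hderiv : ∀ x ∈ Ioo a b, HasDerivWithinAt w (w' x) (Ioi x) x)
    (hflow : ∀ x ∈ Ioo a b, w' x ≤ lam x * w x) (hlam : IntervalIntegrable lam volume a b) :
    w b ≤ exp (∫ s in a..b, lam s) * w a := by
  rcases hab.eq_or_lt with rfl | hab
  · simp
  have hbound : ∀ s ∈ Ioo a b, w b ≤ exp (∫ x in s..b, lam x) * w s := fun s hs =>
    le_exp_integral_mul_of_pos hs.2.le (hw.mono (Icc_subset_Icc_left hs.1.le))
      (fun x hx => hpos x ⟨hs.1.trans_le hx.1, hx.2⟩)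
      (fun x hx => hderiv x ⟨hs.1.trans hx.1, hx.2⟩)
      (fun x hx => hflow x ⟨hs.1.trans hx.1, hx.2⟩)
      (hlam.mono_set (by
        rw [uIcc_of_le hab.le, uIcc_of_le hs.2.le]; exact Icc_subset_Icc_left hs.1.le))
  have hcont : ContinuousWithinAt (fun s => exp (∫ x in s..b, lam x) * w s) (Icc a b) a := by
    have hprim := intervalIntegral.continuousOn_primitive_interval_left
      ((intervalIntegrable_iff' ..).1 hlam)
    rw [uIcc_of_le hab.le] at hprim
    exact ((hprim.rexp).mul hw) a (left_mem_Icc.2 hab.le)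
  have htendsto := (hcont.mono Ioo_subset_Icc_self).tendsto
  rw [nhdsWithin_Ioo_eq_nhdsGT hab] at htendsto
  exact ge_of_tendsto htendsto (eventually_of_mem (Ioo_mem_nhdsGT hab) hbound)

/-- Past the last zero `c` of `w`, the positive case applies on `[c, b]` and gives `w b ≤ 0`. -/
theorem le_exp_integral_mul_of_nonneg (hab : a ≤ b) (hw : ContinuousOn w (Icc a b))
    (hnonneg : ∀ x ∈ Icc a b, 0 ≤ w x)
    (hderiv : ∀ x ∈ Ioo a b, HasDerivWithinAt w (w' x) (Ioi x) x)
    (hflow : ∀ x ∈ Ioo a b, w' x ≤ lam x * w x) (hlam : IntervalIntegrable lam volume a b) :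
    w b ≤ exp (∫ s in a..b, lam s) * w a := by
  by_cases hpos : ∀ x ∈ Ioc a b, 0 < w x
  · exact le_exp_integral_mul_of_pos_on_Ioc hab hw hpos hderiv hflow hlam
  push Not at hpos
  obtain ⟨x₀, hx₀, hwx₀⟩ := hpos
  set Z := Icc a b ∩ w ⁻¹' {0}
  have hZ : IsClosed Z := hw.preimage_isClosed_of_isClosed isClosed_Icc isClosed_singleton
  have hZbdd : BddAbove Z := bddAbove_Icc.mono inter_subset_left
  have hx₀Z : x₀ ∈ Z :=
    ⟨Ioc_subset_Icc_self hx₀, hwx₀.antisymm (hnonneg x₀ (Ioc_subset_Icc_self hx₀))⟩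
  obtain ⟨⟨hca, hcb⟩, hwc⟩ : sSup Z ∈ Z := hZ.csSup_mem ⟨x₀, hx₀Z⟩ hZbdd
  have hlast : w b ≤ exp (∫ s in sSup Z..b, lam s) * w (sSup Z) := by
    refine le_exp_integral_mul_of_pos_on_Ioc hcb (hw.mono (Icc_subset_Icc_left hca))
      (fun x hx => ?_) (fun x hx => hderiv x ⟨hca.trans_lt hx.1, hx.2⟩)
      (fun x hx => hflow x ⟨hca.trans_lt hx.1, hx.2⟩)
      (hlam.mono_set (by rw [uIcc_of_le hab, uIcc_of_le hcb]; exact Icc_subset_Icc_left hca))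
    have hxab : x ∈ Icc a b := ⟨hca.trans hx.1.le, hx.2⟩
    refine (hnonneg x hxab).lt_of_ne fun hwx => ?_
    exact hx.1.not_ge (le_csSup hZbdd ⟨hxab, hwx.symm⟩)
  rw [mem_preimage, mem_singleton_iff] at hwc
  rw [hwc, mul_zero] at hlast
  exact hlast.trans (mul_nonneg (exp_pos _).le (hnonneg a (left_mem_Icc.2 hab)))

theorem le_exp_integral_mul_of_hasDerivAt (hab : a ≤ b)
    (hw_right : ContinuousWithinAt w (Ici a) a) (hnonneg : ∀ x ∈ Icc a b, 0 ≤ w x)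
    (hderiv : ∀ x ∈ Ioc a b, HasDerivAt w (w' x) x)
    (hflow : ∀ x ∈ Ioo a b, w' x ≤ lam x * w x) (hlam : IntervalIntegrable lam volume a b) :
    w b ≤ exp (∫ s in a..b, lam s) * w a := by
  refine le_exp_integral_mul_of_nonneg hab (fun x hx => ?_) hnonneg
    (fun x hx => (hderiv x (Ioo_subset_Ioc_self hx)).hasDerivWithinAt) hflow hlam
  rcases hx.1.eq_or_lt with rfl | hax
  · exact hw_right.mono Icc_subset_Ici_self
  · exact (hderiv x ⟨hax, hx.2⟩).continuousAt.continuousWithinAt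

end Gronwall

theorem le_mul_of_tendsto_nhdsLT {w g : ℝ → ℝ} {x wl c : ℝ} (hc : 0 ≤ c)
    (hwl : Tendsto w (𝓝[<] x) (𝓝 wl)) (hjump : w x ≤ c * wl) (hg : ContinuousAt g x)
    (hle : ∀ᶠ s in 𝓝[<] x, w s ≤ g s) : w x ≤ c * g x :=
  hjump.trans (mul_le_mul_of_nonneg_left
    (le_of_tendsto_of_tendsto hwl (hg.tendsto.mono_left nhdsWithin_le_nhds) hle) hc)

/-- The number of indices `k` with `τ k ≤ s` when `τ` is strictly increasing and unbounded
(otherwise `sInf ∅ = 0` is a junk value). -/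
noncomputable def eventCount (τ : ℕ → ℝ) (s : ℝ) : ℕ := sInf {k | s < τ k}

section EventCount

variable {τ : ℕ → ℝ} {s a b : ℝ} {k : ℕ}

theorem eventCount_le_iff (hτ : StrictMono τ) (hτ_top : Tendsto τ atTop atTop) :
    eventCount τ s ≤ k ↔ s < τ k := by
  refine ⟨fun h => ?_, fun h => Nat.sInf_le h⟩
  have hmem : s < τ (eventCount τ s) :=
    Nat.sInf_mem (hτ_top.eventually_gt_atTop s).exists
  exact hmem.trans_le (hτ.monotone h)

theorem lt_eventCount_iff (hτ : StrictMono τ) (hτ_top : Tendsto τ atTop atTop) :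
    k < eventCount τ s ↔ τ k ≤ s := by
  rw [← not_le, eventCount_le_iff hτ hτ_top, not_lt]

theorem eventCount_mono (hτ : StrictMono τ) (hτ_top : Tendsto τ atTop atTop) :
    Monotone (eventCount τ) := fun _ _ hst =>
  (eventCount_le_iff hτ hτ_top).2 (hst.trans_lt ((eventCount_le_iff hτ hτ_top).1 le_rfl))

theorem apply_mem_Ioc_iff (hτ : StrictMono τ) (hτ_top : Tendsto τ atTop atTop) :
    τ k ∈ Ioc a b ↔ k ∈ Finset.Ico (eventCount τ a) (eventCount τ b) := by
  rw [mem_Ioc, Finset.mem_Ico, eventCount_le_iff hτ hτ_top, lt_eventCount_iff hτ hτ_top]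

theorem eventCount_apply (hτ : StrictMono τ) (hτ_top : Tendsto τ atTop atTop) :
    eventCount τ (τ k) = k + 1 :=
  le_antisymm ((eventCount_le_iff hτ hτ_top).2 (hτ k.lt_succ_self))
    ((lt_eventCount_iff hτ hτ_top).2 le_rfl)

theorem eventually_eventCount_eq (hτ : StrictMono τ) (hτ_top : Tendsto τ atTop atTop) :
    ∀ᶠ s in 𝓝[<] τ k, eventCount τ s = k := by
  cases k with
  | zero =>
    filter_upwards [self_mem_nhdsWithin] with s hs
    exact Nat.le_zero.1 ((eventCount_le_iff hτ hτ_top).2 hs)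
  | succ k =>
    filter_upwards [Ioo_mem_nhdsLT (hτ k.lt_succ_self)] with s hs
    exact le_antisymm ((eventCount_le_iff hτ hτ_top).2 hs.2)
      ((lt_eventCount_iff hτ hτ_top).2 hs.1.le)

end EventCount

theorem le_prod_mul_exp_integral_mul {w w' lam : ℝ → ℝ} {t₀ : ℝ} {τ r wl : ℕ → ℝ}
    (hτ : StrictMono τ) (hτ_top : Tendsto τ atTop atTop) (hr : ∀ k, 0 ≤ r k)
    (hw0 : ∀ t, t₀ ≤ t → 0 ≤ w t) (hrc : ∀ t, t₀ ≤ t → ContinuousWithinAt w (Ici t) t)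
    (hderiv : ∀ t, t₀ ≤ t → t ∉ range τ → HasDerivAt w (w' t) t)
    (hflow : ∀ t, t₀ ≤ t → t ∉ range τ → w' t ≤ lam t * w t)
    (hwl : ∀ k, Tendsto w (𝓝[<] τ k) (𝓝 (wl k))) (hjump : ∀ k, t₀ < τ k → w (τ k) ≤ r k * wl k)
    (hlam : ∀ a b, IntervalIntegrable lam volume a b) {u : ℝ} (hu : t₀ ≤ u) :
    w u ≤ (∏ k ∈ Finset.Ico (eventCount τ t₀) (eventCount τ u), r k) *
      exp (∫ s in t₀..u, lam s) * w t₀ := by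
  have hflow_free : ∀ a b, t₀ ≤ a → a ≤ b → eventCount τ a = eventCount τ b →
      w b ≤ exp (∫ s in a..b, lam s) * w a := by
    intro a b ha hab hN
    have hfree : ∀ x ∈ Ioc a b, x ∉ range τ := by
      rintro x hx ⟨k, rfl⟩
      rw [apply_mem_Ioc_iff hτ hτ_top, hN, Finset.Ico_self] at hx
      exact Finset.notMem_empty k hx
    exact le_exp_integral_mul_of_hasDerivAt hab (hrc a ha) (fun x hx => hw0 x (ha.trans hx.1))
      (fun x hx => hderiv x (ha.trans hx.1.le) (hfree x hx))
      (fun x hx => hflow x (ha.trans hx.1.le) (hfree x (Ioo_subset_Ioc_self hx))) (hlam a b)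
  induction hn : eventCount τ u using Nat.strong_induction_on generalizing u with
  | _ n ih =>
  obtain rfl | ⟨K, hK, rfl⟩ : n = eventCount τ t₀ ∨ ∃ K, eventCount τ t₀ ≤ K ∧ n = K + 1 := by
    rcases (hn ▸ eventCount_mono hτ hτ_top hu).eq_or_lt with h | h
    · exact .inl h.symm
    · exact .inr ⟨n - 1, by omega, by omega⟩
  · simpa using hflow_free t₀ u le_rfl hu hn.symm
  have hτK : τ K ∈ Ioc t₀ u :=
    (apply_mem_Ioc_iff hτ hτ_top).2 (Finset.mem_Ico.2 ⟨hK, by omega⟩)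
  have hafter := hflow_free (τ K) u hτK.1.le hτK.2 ((eventCount_apply hτ hτ_top).trans hn.symm)
  have hbefore : ∀ᶠ s in 𝓝[<] τ K, w s ≤
      (∏ k ∈ Finset.Ico (eventCount τ t₀) K, r k) * exp (∫ x in t₀..s, lam x) * w t₀ := by
    filter_upwards [eventually_eventCount_eq hτ hτ_top, Ioo_mem_nhdsLT hτK.1] with s hNs hs
    simpa [hNs] using ih K (by omega) hs.1.le hNs
  have hat := le_mul_of_tendsto_nhdsLT (hr K) (hwl K) (hjump K hτK.1)
    (((intervalIntegral.continuous_primitive hlam t₀).rexp.const_mul _).mul_const _).continuousAt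
    hbefore
  calc w u ≤ exp (∫ s in τ K..u, lam s) * w (τ K) := hafter
    _ ≤ exp (∫ s in τ K..u, lam s) *
          (r K * ((∏ k ∈ Finset.Ico (eventCount τ t₀) K, r k) *
            exp (∫ s in t₀..τ K, lam s) * w t₀)) := by gcongr
    _ = (∏ k ∈ Finset.Ico (eventCount τ t₀) (K + 1), r k) * exp (∫ s in t₀..u, lam s) * w t₀ := by
      rw [Finset.prod_Ico_succ_top hK, ← intervalIntegral.integral_add_adjacent_intervals
        (hlam t₀ (τ K)) (hlam (τ K) u), exp_add]
      ring

theorem stmt18 (w w' lam : ℝ → ℝ) (t₀ : ℝ) (τ : ℕ → ℝ) (r wl : ℕ → ℝ)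
    (hw0 : ∀ t, t₀ ≤ t → 0 ≤ w t)
    (htmono : StrictMono τ)
    (htinf : Tendsto τ atTop atTop)
    (hr : ∀ k, 0 < r k)
    (hrc : ∀ t, ContinuousWithinAt w (Set.Ici t) t)
    (hderiv : ∀ t, t₀ ≤ t → t ∉ Set.range τ → HasDerivAt w (w' t) t)
    (hflow : ∀ t, t₀ ≤ t → t ∉ Set.range τ → w' t ≤ lam t * w t)
    (hwl : ∀ k, Tendsto w (nhdsWithin (τ k) (Set.Iio (τ k))) (nhds (wl k)))
    (hjump : ∀ k, t₀ < τ k → w (τ k) ≤ r k * wl k)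
    (hlamint : ∀ t, IntervalIntegrable lam volume t₀ t) :
    ∀ t, t₀ ≤ t →
      w t ≤ (∏ᶠ (k : ℕ) (_ : τ k ∈ Set.Ioc t₀ t), r k) *
        Real.exp (∫ s in t₀..t, lam s) * w t₀ := by
  intro t ht
  rw [finprod_cond_eq_prod_of_cond_iff _ fun _ => apply_mem_Ioc_iff htmono htinf]
  exact le_prod_mul_exp_integral_mul htmono htinf (fun k => (hr k).le) hw0 (fun t _ => hrc t)
    hderiv hflow hwl hjump (fun a b => (hlamint a).symm.trans (hlamint b)) ht
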